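/- Let (Ω, P) be a probability space, T a positive integer, S ⊆ Fin T of size s with α := s/T, H a real inner product space, Z_1, …, Z_T : Ω → H mutually independent square-integrable random variables, γ ∈ [0,1], and c_i ∈ H (i ∈ S) constants with ‖c_i − E[Z_i]‖ ≤ G·(σ+δ) for constants G, σ, δ ≥ 0. For each mask configuration b : S → Bool define Z^b := (1/T)·( Σ_{i∈S} (if b(i) then c_i else Z_i) + Σ_{i∉S} Z_i ), let μ_b := E[Z^b], give configurations the product Bernoulli(γ) weights P(b) := γ^{#{i : b(i)=true}}·(1−γ)^{#{i : b(i)=false}}, and let μ̄ := Σ_b P(b)·μ_b. Then Σ_b P(b)·‖μ_b − μ̄‖² ≤ G²·(σ+δ)²·( (γα)² + α·γ·(1−γ)/T ). -/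

import Mathlib

open MeasureTheory ProbabilityTheory

/-- The variance E[‖X − E[X]‖²] of a vector-valued random variable. -/
noncomputable def vecVar {Ω : Type*} [MeasurableSpace Ω] (P : Measure Ω)
    {H : Type*} [NormedAddCommGroup H] [NormedSpace ℝ H] (X : Ω → H) : ℝ :=
  ∫ ω, ‖X ω - ∫ ω', X ω' ∂P‖ ^ 2 ∂P

/-! The mean `μ b` is affine in the mask indicators:
`μ b = T⁻¹ ∑ᵢ E[Zᵢ] + T⁻¹ ∑_{j ∈ S} 1[b j] dⱼ` with `dⱼ = cⱼ - E[Zⱼ]`. Its weighted variance is thus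
`T⁻²` times that of `∑ⱼ 1[b j] dⱼ`; the indicators are independent Bernoulli(γ), so the cross terms
vanish and what remains is `γ (1 - γ) ∑ⱼ ‖dⱼ‖² ≤ γ (1 - γ) s G² (σ + δ)²`. -/

open Finset RealInnerProductSpace

theorem sum_mul_norm_add_smul_sub_sum_smul_sq {β H : Type*} [Fintype β] [NormedAddCommGroup H]
    [NormedSpace ℝ H] (w : β → ℝ) (hw : ∑ b, w b = 1) (A : H) (r : ℝ) (x : β → H) :
    ∑ b, w b * ‖A + r • x b - ∑ b', w b' • (A + r • x b')‖ ^ 2 =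
      r ^ 2 * ∑ b, w b * ‖x b - ∑ b', w b' • x b'‖ ^ 2 := by
  have hmean : ∑ b', w b' • (A + r • x b') = A + r • ∑ b', w b' • x b' := by
    simp only [smul_add, sum_add_distrib, ← sum_smul, hw, one_smul, smul_sum, smul_comm r]
  simp only [hmean, add_sub_add_left_eq_sub, ← smul_sub, norm_smul, mul_pow, Real.norm_eq_abs,
    sq_abs, mul_sum]
  exact sum_congr rfl fun b _ => by ring

section Bernoulli

variable {ι : Type*} [Fintype ι]

def bernoulliWeight (γ : ℝ) (b : ι → Bool) : ℝ :=
  ∏ i, if b i then γ else 1 - γ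

theorem bernoulliWeight_eq_pow_mul_pow (γ : ℝ) (b : ι → Bool) :
    bernoulliWeight γ b = γ ^ #{i | b i = true} * (1 - γ) ^ #{i | b i = false} := by
  simp [bernoulliWeight, prod_ite]

variable [DecidableEq ι]

theorem sum_bernoulliWeight_mul_prod (γ : ℝ) (s : Finset ι) (f : ι → Bool → ℝ) :
    ∑ b, bernoulliWeight γ b * ∏ i ∈ s, f i (b i) =
      ∏ i ∈ s, ((1 - γ) * f i false + γ * f i true) := by
  let g : ι → Bool → ℝ := fun i x => (if x then γ else 1 - γ) * if i ∈ s then f i x else 1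
  calc ∑ b, bernoulliWeight γ b * ∏ i ∈ s, f i (b i) = ∑ b : ι → Bool, ∏ i, g i (b i) := by
        refine sum_congr rfl fun b _ => ?_
        rw [bernoulliWeight, prod_mul_distrib, prod_ite_mem, univ_inter]
    _ = ∏ i, ∑ x, g i x := (Fintype.prod_sum g).symm
    _ = ∏ i, if i ∈ s then (1 - γ) * f i false + γ * f i true else 1 := by
        refine prod_congr rfl fun i _ => ?_
        by_cases hi : i ∈ s
        · simp [g, hi, add_comm]
        · simp [g, hi]
    _ = ∏ i ∈ s, ((1 - γ) * f i false + γ * f i true) := by rw [prod_ite_mem, univ_inter]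

theorem sum_bernoulliWeight (γ : ℝ) : ∑ b : ι → Bool, bernoulliWeight γ b = 1 := by
  simpa using sum_bernoulliWeight_mul_prod γ ∅ fun _ _ => 1

theorem sum_bernoulliWeight_mul_apply (γ : ℝ) (j : ι) (f : Bool → ℝ) :
    ∑ b, bernoulliWeight γ b * f (b j) = (1 - γ) * f false + γ * f true := by
  simpa using sum_bernoulliWeight_mul_prod γ {j} fun _ => f

theorem sum_bernoulliWeight_mul_apply_mul_apply (γ : ℝ) {j k : ι} (hjk : j ≠ k)
    (f g : Bool → ℝ) :
    ∑ b, bernoulliWeight γ b * (f (b j) * g (b k)) =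
      ((1 - γ) * f false + γ * f true) * ((1 - γ) * g false + γ * g true) := by
  simpa [prod_pair hjk, hjk, Ne.symm hjk] using
    sum_bernoulliWeight_mul_prod γ {j, k} fun i => if i = j then f else g

theorem sum_bernoulliWeight_mul_centered_mul_centered (γ : ℝ) (j k : ι) :
    ∑ b, bernoulliWeight γ b *
        ((if b j then 1 - γ else -γ) * (if b k then 1 - γ else -γ)) =
      if j = k then γ * (1 - γ) else 0 := by
  let e : Bool → ℝ := fun x => if x then 1 - γ else -γ
  by_cases hjk : j = k
  · subst hjk
    refine (sum_bernoulliWeight_mul_apply γ j fun x => e x * e x).trans ?_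
    simp [e]
    ring
  · refine (sum_bernoulliWeight_mul_apply_mul_apply γ hjk e e).trans ?_
    simp [e, hjk]
    ring

variable {H : Type*} [NormedAddCommGroup H] [InnerProductSpace ℝ H]

theorem sum_bernoulliWeight_mul_norm_sum_centered_smul_sq (γ : ℝ) (d : ι → H) :
    ∑ b, bernoulliWeight γ b * ‖∑ j, (if b j then 1 - γ else -γ) • d j‖ ^ 2 =
      γ * (1 - γ) * ∑ j, ‖d j‖ ^ 2 := by
  have norm_sq_sum (a : ι → ℝ) :
      ‖∑ j, a j • d j‖ ^ 2 = ∑ j, ∑ k, a j * a k * ⟪d j, d k⟫ := by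
    rw [← real_inner_self_eq_norm_sq, sum_inner]
    simp only [inner_sum, real_inner_smul_left, real_inner_smul_right]
    exact sum_congr rfl fun _ _ => sum_congr rfl fun _ _ => by ring
  calc ∑ b, bernoulliWeight γ b * ‖∑ j, (if b j then 1 - γ else -γ) • d j‖ ^ 2
      = ∑ j, ∑ k, (∑ b, bernoulliWeight γ b *
          ((if b j then 1 - γ else -γ) * (if b k then 1 - γ else -γ))) * ⟪d j, d k⟫ := by
        simp only [norm_sq_sum, mul_sum, sum_mul]
        rw [sum_comm]
        refine sum_congr rfl fun j _ => ?_
        rw [sum_comm]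
        exact sum_congr rfl fun k _ => sum_congr rfl fun b _ => by ring
    _ = γ * (1 - γ) * ∑ j, ‖d j‖ ^ 2 := by
        simp only [sum_bernoulliWeight_mul_centered_mul_centered]
        simp [mul_sum]

theorem sum_bernoulliWeight_smul_sum_ite (γ : ℝ) (d : ι → H) :
    ∑ b, bernoulliWeight γ b • ∑ j, (if b j then d j else 0) = γ • ∑ j, d j := by
  simp only [smul_sum]
  rw [sum_comm]
  refine sum_congr rfl fun j _ => ?_
  calc ∑ b, bernoulliWeight γ b • (if b j then d j else 0)
      = (∑ b, bernoulliWeight γ b * if b j then 1 else 0) • d j := by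
        rw [sum_smul]
        exact sum_congr rfl fun b _ => by split_ifs <;> simp
    _ = γ • d j := by
        rw [sum_bernoulliWeight_mul_apply γ j fun x => if x then 1 else 0]
        simp

theorem sum_bernoulliWeight_mul_norm_sum_ite_sub_mean_sq (γ : ℝ) (d : ι → H) :
    ∑ b, bernoulliWeight γ b * ‖∑ j, (if b j then d j else 0) -
        ∑ b', bernoulliWeight γ b' • ∑ j, (if b' j then d j else 0)‖ ^ 2 =
      γ * (1 - γ) * ∑ j, ‖d j‖ ^ 2 := by
  have hdev (x : Bool) (j : ι) :
      (if x then d j else 0) - γ • d j = (if x then 1 - γ else -γ) • d j := by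
    cases x <;> simp [sub_smul]
  rw [sum_bernoulliWeight_smul_sum_ite, smul_sum,
    ← sum_bernoulliWeight_mul_norm_sum_centered_smul_sq]
  simp only [← sum_sub_distrib, hdev]

end Bernoulli

theorem integral_sum_masked {Ω ι E : Type*} [MeasurableSpace Ω] (P : Measure Ω)
    [IsProbabilityMeasure P] [Fintype ι] [DecidableEq ι] [NormedAddCommGroup E] [NormedSpace ℝ E]
    [CompleteSpace E]
    (S : Finset ι) (Z : ι → Ω → E) (hZ : ∀ i, Integrable (Z i) P) (c : ι → E) (b : S → Bool) :
    ∫ ω, ∑ i, (if h : i ∈ S then (if b ⟨i, h⟩ then c i else Z i ω) else Z i ω) ∂P =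
      ∑ i, ∫ ω, Z i ω ∂P + ∑ j : S, if b j then c j - ∫ ω, Z j ω ∂P else 0 := by
  have hterm (i : ι) :
      ∫ ω, (if h : i ∈ S then (if b ⟨i, h⟩ then c i else Z i ω) else Z i ω) ∂P =
        ∫ ω, Z i ω ∂P + if h : i ∈ S then (if b ⟨i, h⟩ then c i - ∫ ω, Z i ω ∂P else 0) else 0 := by
    by_cases h : i ∈ S
    · by_cases hb : b ⟨i, h⟩ <;> simp [h, hb]
    · simp [h]
  have hint (i : ι) :
      Integrable (fun ω => if h : i ∈ S then (if b ⟨i, h⟩ then c i else Z i ω) else Z i ω) P := by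
    by_cases h : i ∈ S
    · by_cases hb : b ⟨i, h⟩ <;> simp [h, hb, hZ i]
    · simp [h, hZ i]
  rw [integral_finsetSum _ fun i _ => hint i, sum_congr rfl fun i _ => hterm i, sum_add_distrib,
    univ_eq_attach, sum_attach_eq_sum_dite]

theorem mask_mean_variance_bound_general
    {Ω : Type*} [MeasurableSpace Ω] (P : Measure Ω) [IsProbabilityMeasure P]
    (T : ℕ) (S : Finset (Fin T))
    {H : Type*} [NormedAddCommGroup H] [InnerProductSpace ℝ H] [CompleteSpace H]
    (Z : Fin T → Ω → H)
    (hZL2 : ∀ i, MemLp (Z i) 2 P)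
    (γ : ℝ) (hγ : γ ∈ Set.Icc (0 : ℝ) 1)
    (G σ δ : ℝ)
    (c : Fin T → H) (hc : ∀ i ∈ S, ‖c i - ∫ ω, Z i ω ∂P‖ ≤ G * (σ + δ))
    (α : ℝ) (hα : α = (S.card : ℝ) / T)
    (μ : ({i // i ∈ S} → Bool) → H)
    (hμ : ∀ b, μ b = ∫ ω, (T : ℝ)⁻¹ •
      ∑ i : Fin T, (if h : i ∈ S then (if b ⟨i, h⟩ then c i else Z i ω) else Z i ω) ∂P)
    (w : ({i // i ∈ S} → Bool) → ℝ)
    (hw : ∀ b, w b = γ ^ (Finset.univ.filter (fun i => b i = true)).card *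
        (1 - γ) ^ (Finset.univ.filter (fun i => b i = false)).card)
    (μbar : H) (hμbar : μbar = ∑ b : {i // i ∈ S} → Bool, w b • μ b) :
    ∑ b : {i // i ∈ S} → Bool, w b * ‖μ b - μbar‖ ^ 2 ≤
      G ^ 2 * (σ + δ) ^ 2 * ((γ * α) ^ 2 + α * γ * (1 - γ) / T) := by
  obtain ⟨hγ0, hγ1⟩ := hγ
  have hw' : w = bernoulliWeight γ :=
    funext fun b => (hw b).trans (bernoulliWeight_eq_pow_mul_pow γ b).symm
  have hμ' : μ = fun b => (T : ℝ)⁻¹ • ∑ i, ∫ ω, Z i ω ∂P +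
      (T : ℝ)⁻¹ • ∑ j : S, if b j then c j - ∫ ω, Z j ω ∂P else 0 := by
    ext b
    rw [hμ, integral_smul, integral_sum_masked P S Z (fun i => (hZL2 i).integrable one_le_two),
      smul_add]
  have hshift : ∑ j : S, ‖c j - ∫ ω, Z j ω ∂P‖ ^ 2 ≤ S.card * (G * (σ + δ)) ^ 2 :=
    calc _ ≤ ∑ _j : S, (G * (σ + δ)) ^ 2 :=
          sum_le_sum fun j _ => pow_le_pow_left₀ (norm_nonneg _) (hc j j.2) 2
      _ = _ := by simp
  subst hμbar hα
  rw [hμ', hw', sum_mul_norm_add_smul_sub_sum_smul_sq _ (sum_bernoulliWeight γ),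
    sum_bernoulliWeight_mul_norm_sum_ite_sub_mean_sq]
  have hvar : 0 ≤ γ * (1 - γ) := mul_nonneg hγ0 (sub_nonneg.2 hγ1)
  calc (T : ℝ)⁻¹ ^ 2 * (γ * (1 - γ) * ∑ j : S, ‖c j - ∫ ω, Z j ω ∂P‖ ^ 2)
      ≤ (T : ℝ)⁻¹ ^ 2 * (γ * (1 - γ) * (S.card * (G * (σ + δ)) ^ 2)) := by gcongr
    _ = G ^ 2 * (σ + δ) ^ 2 * (S.card / T * γ * (1 - γ) / T) := by ring
    _ ≤ G ^ 2 * (σ + δ) ^ 2 * ((γ * (S.card / T)) ^ 2 + S.card / T * γ * (1 - γ) / T) :=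
        mul_le_mul_of_nonneg_left (le_add_of_nonneg_left (sq_nonneg _)) (by positivity)

/-- bound on the variance of the conditional expectation:
    Σ_b P(b)·‖μ_b − μ̄‖² ≤ G²·(σ+δ)²·((γα)² + α·γ·(1−γ)/T), where μ_b = E[Z^b]
    and μ̄ is the P(b)-weighted average of the μ_b. -/
theorem mask_mean_variance_bound
    {Ω : Type*} [MeasurableSpace Ω] (P : Measure Ω) [IsProbabilityMeasure P]
    (T : ℕ) (hT : 0 < T) (S : Finset (Fin T))
    {H : Type*} [NormedAddCommGroup H] [InnerProductSpace ℝ H] [CompleteSpace H]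
    [MeasurableSpace H] [BorelSpace H]
    (Z : Fin T → Ω → H)
    (hZmeas : ∀ i, Measurable (Z i))
    (hZL2 : ∀ i, MemLp (Z i) 2 P)
    (hZindep : iIndepFun Z P)
    (γ : ℝ) (hγ : γ ∈ Set.Icc (0 : ℝ) 1)
    (G σ δ : ℝ) (hG : 0 ≤ G) (hσ : 0 ≤ σ) (hδ : 0 ≤ δ)
    (c : Fin T → H) (hc : ∀ i ∈ S, ‖c i - ∫ ω, Z i ω ∂P‖ ≤ G * (σ + δ))
    (α : ℝ) (hα : α = (S.card : ℝ) / T)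
    (μ : ({i // i ∈ S} → Bool) → H)
    (hμ : ∀ b, μ b = ∫ ω, (T : ℝ)⁻¹ •
      ∑ i : Fin T, (if h : i ∈ S then (if b ⟨i, h⟩ then c i else Z i ω) else Z i ω) ∂P)
    (w : ({i // i ∈ S} → Bool) → ℝ)
    (hw : ∀ b, w b = γ ^ (Finset.univ.filter (fun i => b i = true)).card *
        (1 - γ) ^ (Finset.univ.filter (fun i => b i = false)).card)
    (μbar : H) (hμbar : μbar = ∑ b : {i // i ∈ S} → Bool, w b • μ b) :
    ∑ b : {i // i ∈ S} → Bool, w b * ‖μ b - μbar‖ ^ 2 ≤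
      G ^ 2 * (σ + δ) ^ 2 * ((γ * α) ^ 2 + α * γ * (1 - γ) / T) :=
  mask_mean_variance_bound_general P T S Z hZL2 γ hγ G σ δ c hc α hα μ hμ w hw μbar hμbar
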